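/- Let P be a finite line connected poset (the line digraph of H_P is connected as an undirected graph), let T be a line connected spanning tree of H_P, let P_T be the sub-poset generated by T, and let M, N be kP-modules such that there is a natural isomorphism φ*(M_T) ⊕ β*(N_T) ≅ φ*(N_T) ⊕ β*(M_T) on the line poset of P_T (the virtual module [M] − [N] has vanishing gradient on T). Then there exists an integer D such that for every covering relation (x,y) of P_T: dim_k ker M(x ≤ y) = dim_k ker N(x ≤ y) + D and dim_k coker M(x ≤ y) = dim_k coker N(x ≤ y) + D. -/

import Mathlib

/-!
STATEMENT 16: Let `P` be a finite line connected poset, `T` a line connected spanning tree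
of `H_P`, and `M`, `N` `kP`-modules such that `[M] − [N]` has vanishing gradient on `T`.
Then there is an integer `D` such that for every covering relation `(x,y)` of `P_T`:
`dim ker M(x≤y) = dim ker N(x≤y) + D` and `dim coker M(x≤y) = dim coker N(x≤y) + D`.
-/

/-- A `kP`-module: a functor from the poset `P` to finite dimensional
`k`-vector spaces, given by concrete data. -/
structure PModule (k : Type) (P : Type) [Field k] [Preorder P] where
  V : P → Type
  [acg : ∀ x, AddCommGroup (V x)]
  [mod : ∀ x, Module k (V x)]
  [fd : ∀ x, FiniteDimensional k (V x)]
  map : ∀ {x y : P}, x ≤ y → (V x →ₗ[k] V y)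
  map_id : ∀ x : P, map (le_refl x) = LinearMap.id
  map_comp : ∀ {x y z : P} (h₁ : x ≤ y) (h₂ : y ≤ z), map (h₁.trans h₂) = (map h₂).comp (map h₁)

attribute [instance] PModule.acg PModule.mod PModule.fd

/-- An element of the line poset/line digraph of a poset `P`: a covering relation. -/
structure Cov (P : Type) [PartialOrder P] : Type where
  src : P
  tgt : P
  cov : src ⋖ tgt

/-- The order relation of the sub-poset `P_T` generated by a spanning subgraph with edge
set `Te`: the reflexive-transitive closure of the edge relation. -/
def ptle {P : Type} [PartialOrder P] (Te : Set (P × P)) (a b : P) : Prop :=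
  Relation.ReflTransGen (fun x y : P => (x, y) ∈ Te) a b

/-- The strict order relation of `P_T`. -/
def ptlt {P : Type} [PartialOrder P] (Te : Set (P × P)) (a b : P) : Prop :=
  ptle Te a b ∧ ¬ ptle Te b a

/-- The covering relation of `P_T`. -/
def ptcov {P : Type} [PartialOrder P] (Te : Set (P × P)) (a b : P) : Prop :=
  ptlt Te a b ∧ ∀ c : P, ptlt Te a c → ¬ ptlt Te c b

/-- The order relation of the line poset of `P_T`, on the edge set `Te`. -/
def tline {P : Type} [PartialOrder P] (Te : Set (P × P)) (e f : ↥Te) : Prop :=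
  Relation.ReflTransGen (fun a b : ↥Te => (a : P × P).2 = (b : P × P).1) e f

/-!
The naturality square of `η` for consecutive edges `a ⋖ b ⋖ c` of `T` relates, through two
isomorphisms, `M(b ≤ c) ⊕ N(a ≤ b)` to `N(b ≤ c) ⊕ M(a ≤ b)`, so their kernels have equal
dimension: `dim ker M(e) - dim ker N(e)` takes the same value on consecutive edges, hence on all
of `T` by line connectedness. At an edge `x ⋖ y`, `η` alone gives
`dim M_y + dim N_x = dim N_y + dim M_x`, and rank–nullity turns the kernel identity into the
cokernel identity. Covering relations of `P_T` are edges of `T`.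
-/

open Module LinearMap

section LinearAlgebra

variable {k : Type*} [Field k] {V₁ V₂ W₁ W₂ : Type*}
  [AddCommGroup V₁] [AddCommGroup V₂] [AddCommGroup W₁] [AddCommGroup W₂]
  [Module k V₁] [Module k V₂] [Module k W₁] [Module k W₂]

theorem finrank_ker_prodMap [FiniteDimensional k V₁] [FiniteDimensional k V₂]
    (f : V₁ →ₗ[k] W₁) (g : V₂ →ₗ[k] W₂) :
    finrank k (ker (f.prodMap g)) = finrank k (ker f) + finrank k (ker g) := by
  have hker : ker (f.prodMap g) = range ((ker f).subtype.prodMap (ker g).subtype) := by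
    rw [ker_prodMap, range_prodMap, Submodule.range_subtype, Submodule.range_subtype]
  rw [hker, finrank_range_of_inj, finrank_prod]
  exact Prod.map_injective.2 ⟨Subtype.val_injective, Subtype.val_injective⟩

theorem finrank_ker_eq_of_comp_eq_comp (e₁ : V₁ ≃ₗ[k] V₂) (e₂ : W₁ ≃ₗ[k] W₂)
    (f : V₁ →ₗ[k] W₁) (g : V₂ →ₗ[k] W₂) (h : e₂.toLinearMap ∘ₗ f = g ∘ₗ e₁.toLinearMap) :
    finrank k (ker f) = finrank k (ker g) :=
  calc finrank k (ker f) = finrank k (ker (e₂.toLinearMap ∘ₗ f)) := by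
        rw [ker_comp_of_ker_eq_bot _ e₂.ker]
    _ = finrank k (ker (g ∘ₗ e₁.toLinearMap)) := by rw [h]
    _ = finrank k (ker g) := by
        rw [ker_comp, Submodule.comap_equiv_eq_map_symm, LinearEquiv.finrank_map_eq]

theorem finrank_quotient_range_eq [FiniteDimensional k V₁] [FiniteDimensional k W₁]
    (f : V₁ →ₗ[k] W₁) :
    (finrank k (W₁ ⧸ range f) : ℤ) = finrank k (ker f) + finrank k W₁ - finrank k V₁ := by
  have hrank := finrank_range_add_finrank_ker f
  have hquot := Submodule.finrank_quotient_add_finrank (range f)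
  omega

end LinearAlgebra

theorem SimpleGraph.Reachable.apply_eq_of_adj {V α : Type*} {G : SimpleGraph V} {g : V → α}
    (h : ∀ a b, G.Adj a b → g a = g b) {x y : V} (hxy : G.Reachable x y) : g x = g y := by
  obtain ⟨w⟩ := hxy
  induction w with
  | nil => rfl
  | cons hadj _ ih => exact (h _ _ hadj).trans ih

section GeneratedPoset

variable {P : Type} [PartialOrder P] {Te : Set (P × P)}

theorem le_of_ptle (hTe : ∀ e ∈ Te, e.1 ⋖ e.2) {a b : P} (h : ptle Te a b) : a ≤ b := by
  induction h with
  | refl => exact le_rfl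
  | tail _ hbc ih => exact ih.trans (hTe _ hbc).le

theorem mem_of_ptcov (hTe : ∀ e ∈ Te, e.1 ⋖ e.2) {x y : P} (h : ptcov Te x y) :
    (x, y) ∈ Te := by
  obtain ⟨⟨hxy, hyx⟩, hmin⟩ := h
  rcases Relation.ReflTransGen.cases_head hxy with rfl | ⟨w, hxw, hwy⟩
  · exact absurd .refl hyx
  by_cases hw : w = y
  · exact hw ▸ hxw
  have hxw' : ptlt Te x w :=
    ⟨.single hxw, fun hwx => (hTe _ hxw).lt.not_ge (le_of_ptle hTe hwx)⟩
  have hwy' : ptlt Te w y :=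
    ⟨hwy, fun hyw => hw (le_antisymm (le_of_ptle hTe hwy) (le_of_ptle hTe hyw))⟩
  exact absurd hwy' (hmin w hxw')

end GeneratedPoset

namespace PModule

variable {k P : Type} [Field k] [PartialOrder P] (M N : PModule k P)

noncomputable def kerDefect {x y : P} (h : x ≤ y) : ℤ :=
  finrank k (ker (M.map h)) - finrank k (ker (N.map h))

theorem kerDefect_eq_of_naturality {a b c : P} (hab : a ≤ b) (hbc : b ≤ c)
    (η₁ : (M.V b × N.V a) ≃ₗ[k] (N.V b × M.V a)) (η₂ : (M.V c × N.V b) ≃ₗ[k] (N.V c × M.V b))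
    (hη : η₂.toLinearMap ∘ₗ (M.map hbc).prodMap (N.map hab) =
      (N.map hbc).prodMap (M.map hab) ∘ₗ η₁.toLinearMap) :
    M.kerDefect N hbc = M.kerDefect N hab := by
  have hker := finrank_ker_eq_of_comp_eq_comp η₁ η₂ _ _ hη
  rw [finrank_ker_prodMap, finrank_ker_prodMap] at hker
  simp only [kerDefect]
  omega

theorem finrank_coker_eq_add_kerDefect {x y : P} (h : x ≤ y)
    (η : (M.V y × N.V x) ≃ₗ[k] (N.V y × M.V x)) :
    (finrank k (M.V y ⧸ range (M.map h)) : ℤ) =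
      finrank k (N.V y ⧸ range (N.map h)) + M.kerDefect N h := by
  have hdim := η.finrank_eq
  rw [finrank_prod, finrank_prod] at hdim
  rw [finrank_quotient_range_eq, finrank_quotient_range_eq, kerDefect]
  omega

end PModule

theorem statement16_general (k : Type) [Field k] (P : Type) [PartialOrder P]
    (Te : Set (P × P))
    -- `T` is a spanning subgraph of the Hasse diagram `H_P` (on the full vertex set `P`) ...
    (hTe : ∀ e ∈ Te, e.1 ⋖ e.2)
    -- ... and is line connected
    (hlc : (SimpleGraph.fromRel (fun e f : ↥Te => (e : P × P).2 = (f : P × P).1)).Connected)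
    (M N : PModule k P)
    -- `[M] − [N]` has vanishing gradient on `T`:
    -- a natural isomorphism `φ*(M_T) ⊕ β*(N_T) ≅ φ*(N_T) ⊕ β*(M_T)`
    (hgrad : ∃ η : ∀ e : ↥Te,
        ((M.V (e : P × P).2 × N.V (e : P × P).1) ≃ₗ[k] (N.V (e : P × P).2 × M.V (e : P × P).1)),
      ∀ (e f : ↥Te), tline Te e f →
        ∀ (h0 : (e : P × P).1 ≤ (f : P × P).1) (h1 : (e : P × P).2 ≤ (f : P × P).2),
          (η f).toLinearMap.comp (LinearMap.prodMap (M.map h1) (N.map h0)) =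
            (LinearMap.prodMap (N.map h1) (M.map h0)).comp ((η e).toLinearMap)) :
    ∃ D : ℤ, ∀ x y : P, ptcov Te x y → ∀ h : x ≤ y,
      (Module.finrank k (LinearMap.ker (M.map h)) : ℤ)
        = (Module.finrank k (LinearMap.ker (N.map h)) : ℤ) + D ∧
      (Module.finrank k (M.V y ⧸ LinearMap.range (M.map h)) : ℤ)
        = (Module.finrank k (N.V y ⧸ LinearMap.range (N.map h)) : ℤ) + D := by
  obtain ⟨η, hη⟩ := hgrad
  let δ : Te → ℤ := fun e => M.kerDefect N (hTe e e.2).le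
  have hstep : ∀ e f : Te, (e : P × P).2 = (f : P × P).1 → δ e = δ f := by
    rintro ⟨⟨a, b⟩, he⟩ ⟨⟨b', c⟩, hf⟩ (rfl : b = b')
    exact (M.kerDefect_eq_of_naturality N _ _ _ _ (hη _ _ (.single rfl) _ _)).symm
  obtain ⟨e₀⟩ := hlc.nonempty
  refine ⟨δ e₀, fun x y hxy h => ?_⟩
  let e : Te := ⟨(x, y), mem_of_ptcov hTe hxy⟩
  have hδ : M.kerDefect N h = δ e₀ := (hlc.preconnected e e₀).apply_eq_of_adj <| by
    rintro a b ⟨-, hab | hba⟩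
    exacts [hstep a b hab, (hstep b a hba).symm]
  refine ⟨?_, ?_⟩
  · rw [← hδ, PModule.kerDefect]
    ring
  · rw [← hδ]
    exact M.finrank_coker_eq_add_kerDefect N h (η e)

theorem statement16 (k : Type) [Field k] (P : Type) [Fintype P] [PartialOrder P]
    -- `P` is line connected: the line digraph of `H_P` is connected as an undirected graph
    (hP : (SimpleGraph.fromRel (fun e f : Cov P => e.tgt = f.src)).Connected)
    (Te : Set (P × P))
    -- `T` is a spanning subgraph of the Hasse diagram `H_P` (on the full vertex set `P`) ...
    (hTe : ∀ e ∈ Te, e.1 ⋖ e.2)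
    -- ... which is a tree ...
    (htree : (SimpleGraph.fromRel (fun a b : P => (a, b) ∈ Te)).IsTree)
    -- ... and is line connected
    (hlc : (SimpleGraph.fromRel (fun e f : ↥Te => (e : P × P).2 = (f : P × P).1)).Connected)
    (M N : PModule k P)
    -- `[M] − [N]` has vanishing gradient on `T`:
    -- a natural isomorphism `φ*(M_T) ⊕ β*(N_T) ≅ φ*(N_T) ⊕ β*(M_T)`
    (hgrad : ∃ η : ∀ e : ↥Te,
        ((M.V (e : P × P).2 × N.V (e : P × P).1) ≃ₗ[k] (N.V (e : P × P).2 × M.V (e : P × P).1)),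
      ∀ (e f : ↥Te), tline Te e f →
        ∀ (h0 : (e : P × P).1 ≤ (f : P × P).1) (h1 : (e : P × P).2 ≤ (f : P × P).2),
          (η f).toLinearMap.comp (LinearMap.prodMap (M.map h1) (N.map h0)) =
            (LinearMap.prodMap (N.map h1) (M.map h0)).comp ((η e).toLinearMap)) :
    ∃ D : ℤ, ∀ x y : P, ptcov Te x y → ∀ h : x ≤ y,
      (Module.finrank k (LinearMap.ker (M.map h)) : ℤ)
        = (Module.finrank k (LinearMap.ker (N.map h)) : ℤ) + D ∧
      (Module.finrank k (M.V y ⧸ LinearMap.range (M.map h)) : ℤ)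
        = (Module.finrank k (N.V y ⧸ LinearMap.range (N.map h)) : ℤ) + D :=
  statement16_general k P Te hTe hlc M N hgrad
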